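/- arXiv:math/0511216 — 2 statements merged into one kernel-verified Lean document; each statement's English description precedes it below -/
import Mathlib

section
/- For unnormalized densities p₀, p₁ and a bridge function p* such that p*/p₀ is π₀-integrable and p*/p₁ is π₁-integrable, the ratio E_{π₀}[p*(X)/p₀(X)] / E_{π₁}[p*(X)/p₁(X)] equals Z₁/Z₀, provided E_{π₁}[p*(X)/p₁(X)] > 0. -/
open MeasureTheory ENNReal

/-!
Both expectations are importance weights against their own target: integrating `ps / p`
against the density `p / Z` cancels `p` (wherever `p` is finite, i.e. almost everywhere) and
leaves `Zs / Z`. The ratio `(Zs / Z₀) / (Zs / Z₁)` is then `Z₁ / Z₀` because `0 < Zs < ∞`.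
-/

theorem ENNReal.div_div_div_cancel_left {a : ℝ≥0∞} (b c : ℝ≥0∞) (ha₀ : a ≠ 0) (ha : a ≠ ∞) :
    a / b / (a / c) = c / b := by
  simp only [div_eq_mul_inv, ENNReal.mul_inv (Or.inl ha₀) (Or.inl ha), inv_inv]
  calc a * b⁻¹ * (a⁻¹ * c) = a * a⁻¹ * (c * b⁻¹) := by ring
    _ = c * b⁻¹ := by rw [ENNReal.mul_inv_cancel ha₀ ha, one_mul]

namespace MeasureTheory

variable {X : Type*} [MeasurableSpace X] {μ : Measure X} {f p : X → ℝ≥0∞}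

theorem lintegral_div_withDensity (hp : Measurable p) (hf : Measurable f)
    (hp_ne_top : ∀ᵐ x ∂μ, p x ≠ ∞) (hfp : ∀ᵐ x ∂μ, p x = 0 → f x = 0) :
    ∫⁻ x, f x / p x ∂μ.withDensity p = ∫⁻ x, f x ∂μ := by
  rw [lintegral_withDensity_eq_lintegral_mul μ hp (g := fun x => f x / p x) (hf.div hp)]
  refine lintegral_congr_ae ?_
  filter_upwards [hp_ne_top, hfp] with x hx_top hx_zero
  rcases eq_or_ne (p x) 0 with h₀ | h₀
  · simp [h₀, hx_zero h₀]
  · exact ENNReal.mul_div_cancel h₀ hx_top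

theorem lintegral_div_withDensity_div_const (hp : Measurable p) (hf : Measurable f)
    (hp_ne_top : ∀ᵐ x ∂μ, p x ≠ ∞) (hfp : ∀ᵐ x ∂μ, p x = 0 → f x = 0) (Z : ℝ≥0∞) :
    ∫⁻ x, f x / p x ∂μ.withDensity (fun x => p x / Z) = (∫⁻ x, f x ∂μ) / Z := by
  have hdensity : (fun x => p x / Z) = Z⁻¹ • p := by
    ext x
    simp [div_eq_mul_inv, mul_comm]
  rw [hdensity, withDensity_smul _ hp, lintegral_smul_measure,
    lintegral_div_withDensity hp hf hp_ne_top hfp, smul_eq_mul, div_eq_mul_inv, mul_comm]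

end MeasureTheory

theorem bridge_sampling_identity_general {X : Type*} [MeasurableSpace X] (μ : Measure X)
    (p₀ p₁ ps : X → ℝ≥0∞) (hp₀ : Measurable p₀) (hp₁ : Measurable p₁) (hps : Measurable ps)
    (Z₀ Z₁ Zs : ℝ≥0∞) (hZ₀ : Z₀ = ∫⁻ x, p₀ x ∂μ) (hZ₁ : Z₁ = ∫⁻ x, p₁ x ∂μ)
    (hZs : Zs = ∫⁻ x, ps x ∂μ)
    (hZ₀fin : Z₀ < ∞) (hZ₁fin : Z₁ < ∞) (hZsfin : Zs < ∞)
    (habs₀ : ∀ x, p₀ x = 0 → ps x = 0) (habs₁ : ∀ x, p₁ x = 0 → ps x = 0)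
    (hBpos : 0 < ∫⁻ x, ps x / p₁ x ∂(μ.withDensity fun x => p₁ x / Z₁)) :
    (∫⁻ x, ps x / p₀ x ∂(μ.withDensity fun x => p₀ x / Z₀)) /
      (∫⁻ x, ps x / p₁ x ∂(μ.withDensity fun x => p₁ x / Z₁)) = Z₁ / Z₀ := by
  have hE₀ := lintegral_div_withDensity_div_const hp₀ hps
    (ae_lt_top hp₀ (hZ₀ ▸ hZ₀fin).ne |>.mono fun _ => ne_of_lt) (ae_of_all μ habs₀) Z₀
  have hE₁ := lintegral_div_withDensity_div_const hp₁ hps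
    (ae_lt_top hp₁ (hZ₁ ▸ hZ₁fin).ne |>.mono fun _ => ne_of_lt) (ae_of_all μ habs₁) Z₁
  rw [hE₁, ← hZs] at hBpos ⊢
  rw [hE₀, ← hZs]
  have hZs₀ : Zs ≠ 0 := fun h => by simp [h] at hBpos
  exact ENNReal.div_div_div_cancel_left Z₀ Z₁ hZs₀ hZsfin.ne

theorem bridge_sampling_identity {X : Type*} [MeasurableSpace X] (μ : Measure X) [SigmaFinite μ]
    (p₀ p₁ ps : X → ℝ≥0∞) (hp₀ : Measurable p₀) (hp₁ : Measurable p₁) (hps : Measurable ps)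
    (Z₀ Z₁ Zs : ℝ≥0∞) (hZ₀ : Z₀ = ∫⁻ x, p₀ x ∂μ) (hZ₁ : Z₁ = ∫⁻ x, p₁ x ∂μ)
    (hZs : Zs = ∫⁻ x, ps x ∂μ)
    (hZ₀pos : 0 < Z₀) (hZ₀fin : Z₀ < ∞) (hZ₁pos : 0 < Z₁) (hZ₁fin : Z₁ < ∞) (hZsfin : Zs < ∞)
    (habs₀ : ∀ x, p₀ x = 0 → ps x = 0) (habs₁ : ∀ x, p₁ x = 0 → ps x = 0)
    (hBpos : 0 < ∫⁻ x, ps x / p₁ x ∂(μ.withDensity fun x => p₁ x / Z₁)) :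
    (∫⁻ x, ps x / p₀ x ∂(μ.withDensity fun x => p₀ x / Z₀)) /
      (∫⁻ x, ps x / p₁ x ∂(μ.withDensity fun x => p₁ x / Z₁)) = Z₁ / Z₀ :=
  bridge_sampling_identity_general μ p₀ p₁ ps hp₀ hp₁ hps Z₀ Z₁ Zs hZ₀ hZ₁ hZs hZ₀fin hZ₁fin hZsfin
    habs₀ habs₁ hBpos
end

section
/- For the shifted uniform family p_η = indicator of (ηt - 1, ηt + 1) with t > 0 and n > t/2 intermediate steps η_j = j/n, the product of ratios p_{η_{j+1}}(x_j)/p_{η_j}(x_j) over independent samples x_j ~ π_{η_j} equals 1 with probability (1 - t/(2n))^n and 0 otherwise; hence the AIS estimate has expectation (1 - t/(2n))^n, which converges to exp(-t/2) as n → ∞, and is strictly less than the true ratio Z₁/Z₀ = 1. -/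
open MeasureTheory Set ENNReal Filter

theorem shifted_uniform_ais_biased (t : ℝ) (ht : 0 < t) (n : ℕ) (hn : t / 2 < (n:ℝ)) :
    let ν : Fin n → Measure ℝ := fun j =>
      (ENNReal.ofReal 2)⁻¹ •
        volume.restrict (Ioo (((j:ℝ)/(n:ℝ)) * t - 1) (((j:ℝ)/(n:ℝ)) * t + 1))
    let P : Measure (Fin n → ℝ) := Measure.pi ν
    let R : (Fin n → ℝ) → ℝ≥0∞ := fun x =>
      ∏ j : Fin n,
        (Ioo ((((j:ℝ)+1)/(n:ℝ)) * t - 1) ((((j:ℝ)+1)/(n:ℝ)) * t + 1)).indicator 1 (x j)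
    P {x | R x = 1} = ENNReal.ofReal ((1 - t / (2*(n:ℝ))) ^ n) ∧
    P {x | R x = 0} = ENNReal.ofReal (1 - (1 - t / (2*(n:ℝ))) ^ n) ∧
    ∫⁻ x, R x ∂P = ENNReal.ofReal ((1 - t / (2*(n:ℝ))) ^ n) ∧
    (1 - t / (2*(n:ℝ))) ^ n < 1 ∧
    Tendsto (fun m : ℕ => (1 - t / (2*(m:ℝ))) ^ m) atTop (nhds (Real.exp (-(t/2)))) := by
  intro ν P R
  have hn0 : (0:ℝ) < n := lt_trans (by positivity) hn
  have hnne : (n:ℝ) ≠ 0 := ne_of_gt hn0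
  have hq0 : 0 < 1 - t / (2 * (n:ℝ)) := by
    rw [sub_pos, div_lt_one (by positivity)]; linarith
  have hq1 : 1 - t / (2 * (n:ℝ)) < 1 := by
    have : 0 < t / (2 * (n:ℝ)) := by positivity
    linarith
  set S : Fin n → Set ℝ := fun j =>
    Ioo ((((j:ℝ)+1)/(n:ℝ)) * t - 1) ((((j:ℝ)+1)/(n:ℝ)) * t + 1) with hS
  have hmeasS : ∀ j, MeasurableSet (S j) := fun j => measurableSet_Ioo
  -- each factor measure is a probability measure
  have h2ne : (ENNReal.ofReal 2) ≠ 0 := by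
    simp [ENNReal.ofReal_eq_zero]
  have h2nt : (ENNReal.ofReal 2) ≠ ⊤ := ENNReal.ofReal_ne_top
  have hνuniv : ∀ j : Fin n, ν j univ = 1 := by
    intro j
    simp only [ν, Measure.smul_apply, smul_eq_mul]
    rw [Measure.restrict_apply MeasurableSet.univ, Set.univ_inter, Real.volume_Ioo]
    rw [show ((j:ℝ)/(n:ℝ)) * t + 1 - (((j:ℝ)/(n:ℝ)) * t - 1) = 2 by ring]
    exact ENNReal.inv_mul_cancel h2ne h2nt
  haveI hprob : ∀ j, IsProbabilityMeasure (ν j) := fun j => ⟨hνuniv j⟩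
  have hν : ∀ j : Fin n, ν j (S j) = ENNReal.ofReal (1 - t / (2 * (n:ℝ))) := by
    intro j
    have hdiff : (((j:ℝ)+1)/(n:ℝ)) * t - ((j:ℝ)/(n:ℝ)) * t = t / n := by
      field_simp; ring
    have htn : t / (n:ℝ) < 2 := by rw [div_lt_iff₀ hn0]; linarith
    have htn0 : 0 < t / (n:ℝ) := by positivity
    simp only [ν, Measure.smul_apply, smul_eq_mul]
    rw [Measure.restrict_apply (hmeasS j), hS]
    rw [Set.Ioo_inter_Ioo]
    rw [max_eq_left (by linarith), min_eq_right (by linarith), Real.volume_Ioo]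
    rw [show ((j:ℝ)/(n:ℝ)) * t + 1 - ((((j:ℝ)+1)/(n:ℝ)) * t - 1) = 2 - t / n by
      linarith]
    rw [← ENNReal.div_eq_inv_mul, ← ENNReal.ofReal_div_of_pos (by norm_num)]
    congr 1
    rw [sub_div, div_div, mul_comm (n:ℝ) 2]
    norm_num
  -- R as indicator of the box
  have hbox : MeasurableSet (Set.pi univ S) := MeasurableSet.univ_pi hmeasS
  have hR : ∀ x, R x = (Set.pi univ S).indicator 1 x := by
    intro x
    by_cases h : x ∈ Set.pi univ S
    · rw [Set.indicator_of_mem h]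
      refine Finset.prod_eq_one fun j _ => ?_
      rw [Set.indicator_of_mem (h j (mem_univ j))]; rfl
    · rw [Set.indicator_of_notMem h]
      rw [Set.mem_univ_pi] at h
      push_neg at h
      obtain ⟨j, hj⟩ := h
      exact Finset.prod_eq_zero (Finset.mem_univ j) (Set.indicator_of_notMem hj _)
  have hset1 : {x | R x = 1} = Set.pi univ S := by
    ext x
    simp only [mem_setOf_eq, hR x]
    by_cases h : x ∈ Set.pi univ S
    · simp [h]
    · simp [h, Set.indicator_of_notMem h]
  have hset0 : {x | R x = 0} = (Set.pi univ S)ᶜ := by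
    ext x
    simp only [mem_setOf_eq, hR x, mem_compl_iff]
    by_cases h : x ∈ Set.pi univ S
    · simp [h]
    · simp [h, Set.indicator_of_notMem h]
  have hPpi : P (Set.pi univ S) = ENNReal.ofReal ((1 - t / (2*(n:ℝ))) ^ n) := by
    rw [Measure.pi_pi]
    simp_rw [hν]
    rw [Finset.prod_const, Finset.card_univ, Fintype.card_fin, ← ENNReal.ofReal_pow hq0.le]
  have hPuniv : P univ = 1 := by
    rw [show (univ : Set (Fin n → ℝ)) = Set.pi univ (fun _ => univ) by simp,
      Measure.pi_pi]
    simp [hνuniv]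
  have hqn1 : (1 - t / (2*(n:ℝ))) ^ n ≤ 1 := pow_le_one₀ hq0.le hq1.le
  refine ⟨?_, ?_, ?_, ?_, ?_⟩
  · rw [hset1, hPpi]
  · rw [hset0, measure_compl hbox (by rw [hPpi]; exact ENNReal.ofReal_ne_top),
      hPuniv, hPpi, ← ENNReal.ofReal_one, ← ENNReal.ofReal_sub _ (pow_nonneg hq0.le n)]
  · rw [lintegral_congr hR, lintegral_indicator_one hbox, hPpi]
  · exact pow_lt_one₀ hq0.le hq1 (Nat.cast_pos.mp hn0).ne'
  · have h := Real.tendsto_one_add_div_pow_exp (-(t/2))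
    convert h using 2 with m
    rw [neg_div, ← div_div]
    ring
end
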